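/- Let X be a set and let k, k̃ : X × X → ℝ be symmetric positive semidefinite kernels such that |k(x, x')| ≤ K₀ and |k(x, x') − k̃(x, x')| ≤ η for all x, x' ∈ X, where K₀ > 0 and η ∈ [0, 1]; set K̂₀ = max(1, K₀) and let σ ∈ (0, 1]. Let T be a positive integer, δ ∈ (0, 1), B' ≥ 0, let x₁, …, x_T ∈ X, let f : X → ℝ satisfy |f(x)| ≤ B' for all x ∈ X, and let ε₁, …, ε_T be real random variables on a probability space, each with law gaussianReal 0 σ². Set y_τ = f(x_τ) + ε_τ. For t ∈ {1, …, T} and x ∈ X, define the posterior means μ_t(x) = k_t(x)ᵀ(K_t + σ²I)⁻¹(y₁, …, y_t)ᵀ and μ̃_t(x) analogously for k̃, where K_t = (k(x_i, x_j))_{i,j≤t} and k_t(x) = (k(x, x_τ))_{τ≤t}. Then with probability at least 1 − δ/4: for every t ∈ {1, …, T} and every x ∈ X, |μ_t(x) − μ̃_t(x)| ≤ 2·K̂₀·(t²·η/σ⁴)·(B' + σ·√(2·log(4T/δ))). (Lemma 10 of the paper, with η = (L+1)ε the approximation error between the exact and empirical NTK.) -/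

import Mathlib

/-!
On the event that every noise term satisfies `|ε_τ| ≤ a := σ √(2 log (4T/δ))`, all observations
are bounded by `B' + a`, and the rest is deterministic. With `A = K + σ²I`, `Ã = K̃ + σ²I` and
`u = Ã⁻¹ y`, the resolvent identity gives `μ − μ̃ = (k − k̃) ⬝ u + k ⬝ A⁻¹ (Ã − A) u`, and
`‖A⁻¹‖, ‖Ã⁻¹‖ ≤ σ⁻²` because the Gram matrices are positive semidefinite; every other factor is
bounded entrywise, hence in `ℓ²` by `√t` or `t` times its entry bound.

By the union bound the complementary event has probability at most `T · exp (-a²/2σ²) = δ/4`.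
This needs the tail bound `P(|ε| > a) ≤ exp (-a²/2σ²)` without the factor `2` of the Chernoff
bound; it comes from comparing the Gaussian density on `[a, ∞)` with its translate by `a`.
-/

open MeasureTheory ProbabilityTheory Matrix Finset

def IsPSDKernel {X : Type*} (k : X → X → ℝ) : Prop :=
  (∀ x x', k x x' = k x' x) ∧
    ∀ (m : ℕ) (x : Fin m → X), (Matrix.of fun i j => k (x i) (x j)).PosSemidef

/-- `μ = kvecᵀ(K + σ²I)⁻¹y` with `K = (k(x_i,x_j))_{i,j}` and `kvec = (k(z,x_i))_i`. -/
noncomputable def postMean {X : Type*} (k : X → X → ℝ) (σ : ℝ) {n : ℕ}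
    (x : Fin n → X) (z : X) (y : Fin n → ℝ) : ℝ :=
  (fun i => k z (x i)) ⬝ᵥ
    (((Matrix.of fun i j => k (x i) (x j)) + σ ^ 2 • (1 : Matrix (Fin n) (Fin n) ℝ))⁻¹ *ᵥ y)

open scoped NNReal ENNReal
open WithLp (toLp)

namespace ProbabilityTheory

variable {v : ℝ≥0}

lemma gaussianReal_Iic_neg (a : ℝ) :
    gaussianReal 0 v (Set.Iic (-a)) = gaussianReal 0 v (Set.Ici a) := by
  conv_lhs => rw [← neg_zero, ← gaussianReal_map_neg]
  rw [Measure.map_apply measurable_neg measurableSet_Iic, Set.neg_preimage, Set.neg_Iic, neg_neg]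

lemma gaussianReal_Ici_zero (hv : v ≠ 0) : gaussianReal 0 v (Set.Ici 0) = 2⁻¹ := by
  have := nullSingletonClass_gaussianReal (μ := 0) hv
  have hIio : gaussianReal 0 v (Set.Iio 0) = gaussianReal 0 v (Set.Ici 0) := by
    rw [measure_congr (Iio_ae_eq_Iic' (measure_singleton 0)), ← gaussianReal_Iic_neg, neg_zero]
  refine ENNReal.eq_inv_of_mul_eq_one_left ?_
  rw [mul_two]
  nth_rewrite 2 [← hIio]
  rw [← Set.compl_Ici, measure_add_measure_compl measurableSet_Ici, measure_univ]

lemma gaussianReal_Ici_le (hv : v ≠ 0) {a : ℝ} (ha : 0 ≤ a) :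
    gaussianReal 0 v (Set.Ici a) ≤ ENNReal.ofReal (Real.exp (-a ^ 2 / (2 * v))) / 2 := by
  set c := ENNReal.ofReal (Real.exp (-a ^ 2 / (2 * v)))
  have hpdf : ∀ y ∈ Set.Ici a, gaussianPDF 0 v y ≤ c * gaussianPDF a v y := by
    intro y hy
    rw [gaussianPDF, gaussianPDF, ← ENNReal.ofReal_mul (Real.exp_nonneg _), gaussianPDFReal,
      gaussianPDFReal, mul_left_comm, ← Real.exp_add]
    gcongr
    rw [← add_div, div_le_div_iff_of_pos_right (by positivity)]
    nlinarith [mul_nonneg ha (sub_nonneg.mpr (Set.mem_Ici.mp hy))]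
  have hshift : gaussianReal a v (Set.Ici a) = gaussianReal 0 v (Set.Ici 0) := by
    rw [← zero_add a, ← gaussianReal_map_add_const,
      Measure.map_apply (measurable_add_const _) measurableSet_Ici]
    simp
  calc gaussianReal 0 v (Set.Ici a) = ∫⁻ y in Set.Ici a, gaussianPDF 0 v y :=
        gaussianReal_apply 0 hv _
    _ ≤ ∫⁻ y in Set.Ici a, c * gaussianPDF a v y := setLIntegral_mono (by fun_prop) hpdf
    _ = c * gaussianReal a v (Set.Ici a) := by
        rw [lintegral_const_mul _ (measurable_gaussianPDF a v), gaussianReal_apply a hv]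
    _ = c / 2 := by rw [hshift, gaussianReal_Ici_zero hv, div_eq_mul_inv]

lemma gaussianReal_abs_gt_le (hv : v ≠ 0) {a : ℝ} (ha : 0 ≤ a) :
    gaussianReal 0 v {y | a < |y|} ≤ ENNReal.ofReal (Real.exp (-a ^ 2 / (2 * v))) := by
  have hsub : {y : ℝ | a < |y|} ⊆ Set.Ici a ∪ Set.Iic (-a) := fun y (hy : a < |y|) => by
    rcases lt_abs.mp hy with h | h
    · exact Or.inl h.le
    · exact Or.inr (le_neg.mpr h.le)
  calc gaussianReal 0 v {y | a < |y|} ≤ gaussianReal 0 v (Set.Ici a ∪ Set.Iic (-a)) :=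
        measure_mono hsub
    _ ≤ gaussianReal 0 v (Set.Ici a) + gaussianReal 0 v (Set.Ici a) := by
        nth_rewrite 2 [← gaussianReal_Iic_neg]; exact measure_union_le _ _
    _ ≤ ENNReal.ofReal (Real.exp (-a ^ 2 / (2 * v))) := by
        grw [gaussianReal_Ici_le hv ha, ENNReal.add_halves]

end ProbabilityTheory

section EuclideanBounds

variable {ι : Type*} [Fintype ι]

lemma abs_dotProduct_le_norm_mul_norm (v w : ι → ℝ) :
    |v ⬝ᵥ w| ≤ ‖toLp 2 v‖ * ‖toLp 2 w‖ := by
  simpa [EuclideanSpace.inner_toLp_toLp, dotProduct_comm] using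
    abs_real_inner_le_norm (toLp 2 v) (toLp 2 w)

lemma norm_toLp_le_sqrt_card_mul {v : ι → ℝ} {c : ℝ} (h : ∀ i, |v i| ≤ c) :
    ‖toLp 2 v‖ ≤ √(Fintype.card ι) * c := by
  rcases isEmpty_or_nonempty ι with _ | ⟨⟨i⟩⟩
  · simp [EuclideanSpace.norm_eq]
  have hc : 0 ≤ c := (abs_nonneg _).trans (h i)
  rw [EuclideanSpace.norm_eq, ← Real.sqrt_sq hc, ← Real.sqrt_mul (Nat.cast_nonneg _)]
  gcongr
  calc ∑ j, ‖v j‖ ^ 2 ≤ ∑ _j : ι, c ^ 2 := by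
        gcongr with j; rw [Real.norm_eq_abs]; exact h j
    _ = Fintype.card ι * c ^ 2 := by simp

lemma norm_toLp_mulVec_le {M : Matrix ι ι ℝ} {c : ℝ} (h : ∀ i j, |M i j| ≤ c) (v : ι → ℝ) :
    ‖toLp 2 (M *ᵥ v)‖ ≤ Fintype.card ι * c * ‖toLp 2 v‖ := by
  have hrow : ∀ i, |(M *ᵥ v) i| ≤ √(Fintype.card ι) * c * ‖toLp 2 v‖ := fun i =>
    (abs_dotProduct_le_norm_mul_norm _ v).trans
      (mul_le_mul_of_nonneg_right (norm_toLp_le_sqrt_card_mul (h i)) (norm_nonneg _))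
  calc ‖toLp 2 (M *ᵥ v)‖ ≤ √(Fintype.card ι) * (√(Fintype.card ι) * c * ‖toLp 2 v‖) :=
        norm_toLp_le_sqrt_card_mul hrow
    _ = Fintype.card ι * c * ‖toLp 2 v‖ := by
        rw [← mul_assoc, ← mul_assoc, Real.mul_self_sqrt (Nat.cast_nonneg _)]

variable [DecidableEq ι]

lemma Matrix.PosSemidef.norm_toLp_inv_add_smul_one_mulVec_le {K : Matrix ι ι ℝ}
    (hK : K.PosSemidef) {c : ℝ} (hc : 0 < c) (v : ι → ℝ) :
    ‖toLp 2 ((K + c • 1)⁻¹ *ᵥ v)‖ ≤ ‖toLp 2 v‖ / c := by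
  set w := (K + c • 1)⁻¹ *ᵥ v
  have hdet : IsUnit (K + c • 1).det :=
    (isUnit_iff_isUnit_det _).mp (PosDef.posSemidef_add hK (PosDef.one.smul hc)).isUnit
  have hv : v = K *ᵥ w + c • w :=
    calc v = (K + c • 1) *ᵥ w := by rw [mulVec_mulVec, mul_nonsing_inv _ hdet, one_mulVec]
      _ = K *ᵥ w + c • w := by simp only [add_mulVec, smul_mulVec, one_mulVec]
  have hcoerc : c * ‖toLp 2 w‖ ^ 2 ≤ ‖toLp 2 w‖ * ‖toLp 2 v‖ := by
    calc c * ‖toLp 2 w‖ ^ 2 ≤ w ⬝ᵥ (K *ᵥ w) + c * (w ⬝ᵥ w) := by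
          rw [← real_inner_self_eq_norm_sq, EuclideanSpace.inner_toLp_toLp, star_trivial]
          simpa using hK.dotProduct_mulVec_nonneg w
      _ = w ⬝ᵥ v := by rw [hv, dotProduct_add, dotProduct_smul, smul_eq_mul]
      _ ≤ ‖toLp 2 w‖ * ‖toLp 2 v‖ := (le_abs_self _).trans (abs_dotProduct_le_norm_mul_norm w v)
  rcases (norm_nonneg (toLp 2 w)).eq_or_lt with hw | hw
  · rw [← hw]; positivity
  · rw [le_div_iff₀ hc]
    exact le_of_mul_le_mul_left (by nlinarith) hw

lemma dotProduct_inv_mulVec_sub_dotProduct_inv_mulVec {A A' : Matrix ι ι ℝ} (hA : IsUnit A)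
    (hA' : IsUnit A') (a a' y : ι → ℝ) :
    a ⬝ᵥ (A⁻¹ *ᵥ y) - a' ⬝ᵥ (A'⁻¹ *ᵥ y) =
      (a - a') ⬝ᵥ (A'⁻¹ *ᵥ y) + a ⬝ᵥ (A⁻¹ *ᵥ ((A' - A) *ᵥ (A'⁻¹ *ᵥ y))) := by
  have hres : A⁻¹ - A'⁻¹ = A⁻¹ * (A' - A) * A'⁻¹ := by
    simpa only [nonsing_inv_eq_ringInverse] using Ring.inverse_sub_inverse (iff_of_true hA hA')
  rw [mulVec_mulVec, mulVec_mulVec, ← hres, sub_mulVec, sub_dotProduct, dotProduct_sub]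
  ring

theorem abs_dotProduct_inv_add_smul_one_mulVec_sub_le {K K' : Matrix ι ι ℝ} (hK : K.PosSemidef)
    (hK' : K'.PosSemidef) {c : ℝ} (hc : 0 < c) {a a' y : ι → ℝ} {α η Y : ℝ} (hη : 0 ≤ η)
    (ha : ∀ i, |a i| ≤ α) (haa' : ∀ i, |a i - a' i| ≤ η) (hKK' : ∀ i j, |K i j - K' i j| ≤ η)
    (hy : ∀ i, |y i| ≤ Y) :
    |a ⬝ᵥ ((K + c • 1)⁻¹ *ᵥ y) - a' ⬝ᵥ ((K' + c • 1)⁻¹ *ᵥ y)| ≤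
      Fintype.card ι * η * Y / c + Fintype.card ι ^ 2 * α * η * Y / c ^ 2 := by
  set n : ℝ := (Fintype.card ι : ℝ)
  have hn : √n * √n = n := Real.mul_self_sqrt (Nat.cast_nonneg _)
  set u := (K' + c • 1)⁻¹ *ᵥ y
  have hu : ‖toLp 2 u‖ ≤ √n * Y / c :=
    (hK'.norm_toLp_inv_add_smul_one_mulVec_le hc y).trans
      (by gcongr; exact norm_toLp_le_sqrt_card_mul hy)
  have hdiff : ∀ i j, |(K' + c • 1 - (K + c • 1)) i j| ≤ η := fun i j => by
    simpa [abs_sub_comm] using hKK' i j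
  have hfirst : |(a - a') ⬝ᵥ u| ≤ n * η * Y / c := calc
    |(a - a') ⬝ᵥ u| ≤ ‖toLp 2 (a - a')‖ * ‖toLp 2 u‖ := abs_dotProduct_le_norm_mul_norm _ _
    _ ≤ (√n * η) * (√n * Y / c) := by gcongr; exact norm_toLp_le_sqrt_card_mul haa'
    _ = n * η * Y / c := by linear_combination (η * Y / c) * hn
  have hsecond : |a ⬝ᵥ ((K + c • 1)⁻¹ *ᵥ ((K' + c • 1 - (K + c • 1)) *ᵥ u))| ≤
      n ^ 2 * α * η * Y / c ^ 2 := calc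
    _ ≤ ‖toLp 2 a‖ * ‖toLp 2 ((K + c • 1)⁻¹ *ᵥ ((K' + c • 1 - (K + c • 1)) *ᵥ u))‖ :=
        abs_dotProduct_le_norm_mul_norm _ _
    _ ≤ (√n * α) * (n * η * (√n * Y / c) / c) := by
        gcongr
        · exact (norm_nonneg _).trans (norm_toLp_le_sqrt_card_mul ha)
        · exact norm_toLp_le_sqrt_card_mul ha
        · refine (hK.norm_toLp_inv_add_smul_one_mulVec_le hc _).trans ?_
          gcongr
          exact (norm_toLp_mulVec_le hdiff u).trans (by gcongr)
    _ = n ^ 2 * α * η * Y / c ^ 2 := by linear_combination (n * α * η * Y / c ^ 2) * hn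
  have hunit : ∀ {M : Matrix ι ι ℝ}, M.PosSemidef → IsUnit (M + c • 1) := fun hM =>
    (PosDef.posSemidef_add hM (PosDef.one.smul hc)).isUnit
  rw [dotProduct_inv_mulVec_sub_dotProduct_inv_mulVec (hunit hK) (hunit hK')]
  exact (abs_add_le _ _).trans (add_le_add hfirst hsecond)

end EuclideanBounds

theorem abs_postMean_sub_postMean_le {X : Type*} {k k' : X → X → ℝ} (hk : IsPSDKernel k)
    (hk' : IsPSDKernel k') {K₀ η σ Y : ℝ} (hbound : ∀ x x', |k x x'| ≤ K₀)
    (hdiff : ∀ x x', |k x x' - k' x x'| ≤ η) (hσ : 0 < σ) {n : ℕ} (x : Fin n → X) (z : X)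
    {y : Fin n → ℝ} (hy : ∀ i, |y i| ≤ Y) :
    |postMean k σ x z y - postMean k' σ x z y| ≤
      n * η * Y / σ ^ 2 + n ^ 2 * K₀ * η * Y / σ ^ 4 := by
  have h := abs_dotProduct_inv_add_smul_one_mulVec_sub_le (hk.2 n x) (hk'.2 n x) (pow_pos hσ 2)
    ((abs_nonneg _).trans (hdiff z z)) (fun i => hbound z (x i)) (fun i => hdiff z (x i))
    (fun i j => hdiff (x i) (x j)) hy
  rwa [Fintype.card_fin, ← pow_mul] at h

lemma add_le_two_mul_max_one_mul {n K₀ η σ Y : ℝ} (hn : 1 ≤ n) (hσ : 0 < σ) (hσ1 : σ ≤ 1)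
    (hη : 0 ≤ η) (hY : 0 ≤ Y) :
    n * η * Y / σ ^ 2 + n ^ 2 * K₀ * η * Y / σ ^ 4 ≤ 2 * max 1 K₀ * (n ^ 2 * η / σ ^ 4) * Y := by
  have hfirst : n * η * Y / σ ^ 2 ≤ n ^ 2 * η / σ ^ 4 * Y := by
    rw [div_mul_eq_mul_div, div_le_div_iff₀ (by positivity) (by positivity)]
    have hσ4 : σ ^ 4 ≤ σ ^ 2 := pow_le_pow_of_le_one hσ.le hσ1 (by norm_num)
    have hn2 : n ≤ n ^ 2 := by nlinarith
    calc n * η * Y * σ ^ 4 ≤ n ^ 2 * η * Y * σ ^ 2 := by gcongr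
      _ = _ := by ring
  calc n * η * Y / σ ^ 2 + n ^ 2 * K₀ * η * Y / σ ^ 4
      ≤ 1 * (n ^ 2 * η / σ ^ 4 * Y) + K₀ * (n ^ 2 * η / σ ^ 4 * Y) := by
        rw [one_mul]; exact add_le_add hfirst (le_of_eq (by ring))
    _ ≤ max 1 K₀ * (n ^ 2 * η / σ ^ 4 * Y) + max 1 K₀ * (n ^ 2 * η / σ ^ 4 * Y) := by
        gcongr; exacts [le_max_left _ _, le_max_right _ _]
    _ = 2 * max 1 K₀ * (n ^ 2 * η / σ ^ 4) * Y := by ring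

lemma measure_exists_abs_gt_le_of_map_eq_gaussianReal {Ω ι : Type*} [MeasurableSpace Ω]
    {P : Measure Ω} {ε : ι → Ω → ℝ} {s : Finset ι} {v : ℝ≥0} (hv : v ≠ 0)
    (hε : ∀ τ ∈ s, P.map (ε τ) = gaussianReal 0 v) {a : ℝ} (ha : 0 ≤ a) :
    P {ω | ∃ τ ∈ s, a < |ε τ ω|} ≤ #s * ENNReal.ofReal (Real.exp (-a ^ 2 / (2 * v))) := by
  have htail : ∀ τ ∈ s, P {ω | a < |ε τ ω|} ≤ ENNReal.ofReal (Real.exp (-a ^ 2 / (2 * v))) :=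
    fun τ hτ => by
      have hlaw : HasLaw (ε τ) (gaussianReal 0 v) P :=
        ⟨.of_map_ne_zero (by rw [hε τ hτ]; exact IsProbabilityMeasure.ne_zero _), hε τ hτ⟩
      rw [hlaw.measure_eq (measurableSet_lt measurable_const continuous_abs.measurable)]
      exact gaussianReal_abs_gt_le hv ha
  calc P {ω | ∃ τ ∈ s, a < |ε τ ω|} = P (⋃ τ ∈ s, {ω | a < |ε τ ω|}) := by
        congr 1; ext; simp
    _ ≤ ∑ τ ∈ s, P {ω | a < |ε τ ω|} := measure_biUnion_finset_le _ _
    _ ≤ ∑ τ ∈ s, ENNReal.ofReal (Real.exp (-a ^ 2 / (2 * v))) := sum_le_sum htail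
    _ = _ := by rw [sum_const, nsmul_eq_mul]

theorem posterior_mean_perturbation_whp_general
    {X : Type*} (k ktil : X → X → ℝ)
    (hk : IsPSDKernel k) (hktil : IsPSDKernel ktil)
    (K₀ η : ℝ) (hη0 : 0 ≤ η)
    (hbound : ∀ x x', |k x x'| ≤ K₀)
    (hdiff : ∀ x x', |k x x' - ktil x x'| ≤ η)
    (σ : ℝ) (hσ : 0 < σ) (hσ1 : σ ≤ 1)
    (T : ℕ) (hT : 0 < T) (δ : ℝ) (hδ : δ ∈ Set.Ioo (0 : ℝ) 1)
    (B' : ℝ) (hB' : 0 ≤ B')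
    (x : ℕ → X) (f : X → ℝ) (hf : ∀ z : X, |f z| ≤ B')
    {Ω : Type*} [MeasureSpace Ω] [IsProbabilityMeasure (ℙ : Measure Ω)]
    (ε : ℕ → Ω → ℝ)
    (hε : ∀ τ ∈ Finset.Icc 1 T,
      Measure.map (ε τ) ℙ = gaussianReal 0 ⟨σ ^ 2, sq_nonneg σ⟩) :
    1 - ENNReal.ofReal (δ / 4) ≤
      ℙ {ω : Ω | ∀ t ∈ Finset.Icc 1 T, ∀ z : X,
          |postMean k σ (fun i : Fin t => x (i.val + 1)) z
              (fun i : Fin t => f (x (i.val + 1)) + ε (i.val + 1) ω) -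
            postMean ktil σ (fun i : Fin t => x (i.val + 1)) z
              (fun i : Fin t => f (x (i.val + 1)) + ε (i.val + 1) ω)| ≤
            2 * max 1 K₀ * ((t : ℝ) ^ 2 * η / σ ^ 4) *
              (B' + σ * Real.sqrt (2 * Real.log (4 * T / δ)))} := by
  obtain ⟨hδ0, hδ1⟩ := hδ
  have hT1 : (1 : ℝ) ≤ T := Nat.one_le_cast.mpr hT
  set L := Real.log (4 * T / δ)
  set a := σ * √(2 * L)
  have hL : 0 ≤ L := Real.log_nonneg ((one_le_div hδ0).mpr (by linarith))
  set v : ℝ≥0 := ⟨σ ^ 2, sq_nonneg σ⟩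
  have hv : (v : ℝ) = σ ^ 2 := rfl
  have hexp : Real.exp (-a ^ 2 / (2 * v)) = δ / (4 * T) := by
    rw [hv, mul_pow, Real.sq_sqrt (by positivity), show -(σ ^ 2 * (2 * L)) / (2 * σ ^ 2) = -L by
      field_simp, Real.exp_neg, Real.exp_log (by positivity), inv_div]
  set bad := {ω : Ω | ∃ τ ∈ Icc 1 T, a < |ε τ ω|}
  have hbad : ℙ bad ≤ ENNReal.ofReal (δ / 4) := by
    refine (measure_exists_abs_gt_le_of_map_eq_gaussianReal (v := v)
      (NNReal.coe_pos.mp (hv ▸ pow_pos hσ 2)).ne' hε (by positivity)).trans_eq ?_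
    rw [hexp, Nat.card_Icc, add_tsub_cancel_right, ← ENNReal.ofReal_natCast,
      ← ENNReal.ofReal_mul (by positivity)]
    congr 1
    field_simp
  have hgood : 1 - ℙ bad ≤ ℙ badᶜ :=
    tsub_le_iff_left.mpr (measure_univ (μ := (ℙ : Measure Ω)) ▸ measure_univ_le_add_compl bad)
  refine (tsub_le_tsub_left hbad 1).trans (hgood.trans (measure_mono ?_))
  intro ω hω t ht z
  obtain ⟨ht1, htT⟩ := mem_Icc.mp ht
  have hy : ∀ i : Fin t, |f (x (i.val + 1)) + ε (i.val + 1) ω| ≤ B' + a := fun i =>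
    (abs_add_le _ _).trans <| add_le_add (hf _) <|
      not_lt.mp fun h => hω ⟨i.val + 1, mem_Icc.mpr ⟨by omega, by omega⟩, h⟩
  exact (abs_postMean_sub_postMean_le hk hktil hbound hdiff hσ _ z hy).trans
    (add_le_two_mul_max_one_mul (Nat.one_le_cast.mpr ht1) hσ hσ1 hη0 (by positivity))

/-- Lemma 10 of the paper: with probability at least `1 − δ/4`, the GP posterior means
computed with the exact NTK `k` and with the empirical NTK `k̃` (which differ entrywise
by at most `η`) on the noisy observations `y_τ = f(x_τ) + ε_τ` satisfy, simultaneously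
for all `t ≤ T` and all test points `z`,
`|μ_t(z) − μ̃_t(z)| ≤ 2·K̂₀·(t²η/σ⁴)·(B' + σ√(2 log(4T/δ)))`. -/
theorem posterior_mean_perturbation_whp
    {X : Type*} (k ktil : X → X → ℝ)
    (hk : IsPSDKernel k) (hktil : IsPSDKernel ktil)
    (K₀ η : ℝ) (hK₀ : 0 < K₀) (hη0 : 0 ≤ η) (hη1 : η ≤ 1)
    (hbound : ∀ x x', |k x x'| ≤ K₀)
    (hdiff : ∀ x x', |k x x' - ktil x x'| ≤ η)
    (σ : ℝ) (hσ : 0 < σ) (hσ1 : σ ≤ 1)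
    (T : ℕ) (hT : 0 < T) (δ : ℝ) (hδ : δ ∈ Set.Ioo (0 : ℝ) 1)
    (B' : ℝ) (hB' : 0 ≤ B')
    (x : ℕ → X) (f : X → ℝ) (hf : ∀ z : X, |f z| ≤ B')
    {Ω : Type*} [MeasureSpace Ω] [IsProbabilityMeasure (ℙ : Measure Ω)]
    (ε : ℕ → Ω → ℝ)
    (hε : ∀ τ ∈ Finset.Icc 1 T,
      Measure.map (ε τ) ℙ = gaussianReal 0 ⟨σ ^ 2, sq_nonneg σ⟩) :
    1 - ENNReal.ofReal (δ / 4) ≤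
      ℙ {ω : Ω | ∀ t ∈ Finset.Icc 1 T, ∀ z : X,
          |postMean k σ (fun i : Fin t => x (i.val + 1)) z
              (fun i : Fin t => f (x (i.val + 1)) + ε (i.val + 1) ω) -
            postMean ktil σ (fun i : Fin t => x (i.val + 1)) z
              (fun i : Fin t => f (x (i.val + 1)) + ε (i.val + 1) ω)| ≤
            2 * max 1 K₀ * ((t : ℝ) ^ 2 * η / σ ^ 4) *
              (B' + σ * Real.sqrt (2 * Real.log (4 * T / δ)))} :=
  posterior_mean_perturbation_whp_general k ktil hk hktil K₀ η hη0 hbound hdiff σ hσ hσ1 T hT δ hδ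
    B' hB' x f hf ε hε
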